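/- Let P and P' be ⊕-bisimilar and uniform AC-MAS (over domains U and U') and let φ be an FO-CTLK formula. Suppose that (1) for every temporal-epistemic run r with r(0) = s0 and all k ≥ 0, |U'| ≥ |adom(r(k)) ∪ adom(r(k+1)) ∪ C| + |vars(φ)|, and (2) for every temporal-epistemic run r' with r'(0) = s0' and all k ≥ 0, |U| ≥ |adom(r'(k)) ∪ adom(r'(k+1)) ∪ C| + |vars(φ)|. Then P ⊨ φ if and only if P' ⊨ φ. -/

import Mathlib

/-!  Common formalisation of artifact-centric multi-agent systems (AC-MAS). -/

open Set

/-- A database schema: a finite type of relation symbols, each with an arity. -/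
structure Schema : Type 1 where
  Rel : Type
  [relFin : Fintype Rel]
  arity : Rel → ℕ

attribute [instance] Schema.relFin

/-- A `D`-instance over an interpretation domain `U`: every relation symbol is
interpreted as a finite set of tuples over `U`. -/
structure Inst (D : Schema) (U : Type) : Type where
  rel : ∀ r : D.Rel, Set (Fin (D.arity r) → U)
  finite : ∀ r, (rel r).Finite

/-- The active domain of an instance. -/
def Inst.adom {D : Schema} {U : Type} (I : Inst D U) : Set U :=
  { u | ∃ (r : D.Rel) (t : Fin (D.arity r) → U), t ∈ I.rel r ∧ ∃ j, t j = u }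

/-- The schema `D` together with a primed copy of every relation symbol. -/
def Schema.double (D : Schema) : Schema where
  Rel := D.Rel ⊕ D.Rel
  relFin := inferInstance
  arity := Sum.elim D.arity D.arity

/-- The disjunctive join `I ⊕ J`: unprimed symbols are interpreted as in `I`,
primed symbols as in `J`. -/
def Inst.oplus {D : Schema} {U : Type} (I J : Inst D U) : Inst D.double U where
  rel := fun r => match r with
    | .inl r₀ => I.rel r₀
    | .inr r₀ => J.rel r₀
  finite := fun r => by
    cases r with
    | inl r₀ => exact I.finite r₀
    | inr r₀ => exact J.finite r₀

/-- Image of an instance under a map of domains. -/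
def Inst.map {D : Schema} {C U : Type} (f : C → U) (I : Inst D C) : Inst D U where
  rel := fun r => (fun t => f ∘ t) '' I.rel r
  finite := fun r => (I.finite r).image _

/-! ### First-order formulas -/

/-- Terms: variables (natural numbers) or constants from `C`. -/
abbrev Term (C : Type) := ℕ ⊕ C

def Term.varsF {C : Type} : Term C → Finset ℕ
  | .inl x => {x}
  | .inr _ => ∅

def Term.constsS {C : Type} : Term C → Set C
  | .inl _ => ∅
  | .inr c => {c}

def Term.val {C U : Type} (cst : C → U) (σ : ℕ → U) : Term C → U
  | .inl x => σ x
  | .inr c => cst c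

/-- First-order formulas over schema `D`, with equality, constants from `C`
and no function symbols. -/
inductive FO (D : Schema) (C : Type) : Type where
  | eq : Term C → Term C → FO D C
  | rel : (r : D.Rel) → (Fin (D.arity r) → Term C) → FO D C
  | not : FO D C → FO D C
  | imp : FO D C → FO D C → FO D C
  | all : ℕ → FO D C → FO D C

namespace FO

variable {D : Schema} {C : Type}

/-- Free variables. -/
def free : FO D C → Finset ℕ
  | .eq t₁ t₂ => t₁.varsF ∪ t₂.varsF
  | .rel _ ts => Finset.univ.biUnion fun j => (ts j).varsF
  | .not φ => φ.free
  | .imp φ ψ => φ.free ∪ ψ.free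
  | .all x φ => φ.free.erase x

/-- All variables. -/
def vars : FO D C → Finset ℕ
  | .eq t₁ t₂ => t₁.varsF ∪ t₂.varsF
  | .rel _ ts => Finset.univ.biUnion fun j => (ts j).varsF
  | .not φ => φ.vars
  | .imp φ ψ => φ.vars ∪ ψ.vars
  | .all x φ => insert x φ.vars

/-- Constants mentioned in a formula. -/
def consts : FO D C → Set C
  | .eq t₁ t₂ => t₁.constsS ∪ t₂.constsS
  | .rel _ ts => ⋃ j, (ts j).constsS
  | .not φ => φ.consts
  | .imp φ ψ => φ.consts ∪ ψ.consts
  | .all _ φ => φ.consts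

/-- The formula mentions only relation symbols from `R`. -/
def UsesOnly (R : Set D.Rel) : FO D C → Prop
  | .eq _ _ => True
  | .rel r _ => r ∈ R
  | .not φ => φ.UsesOnly R
  | .imp φ ψ => φ.UsesOnly R ∧ ψ.UsesOnly R
  | .all _ φ => φ.UsesOnly R

/-- Satisfaction of FO-formulas, with active-domain quantification. -/
def sat {U : Type} (cst : C → U) (I : Inst D U) : (ℕ → U) → FO D C → Prop
  | σ, .eq t₁ t₂ => t₁.val cst σ = t₂.val cst σ
  | σ, .rel r ts => (fun j => (ts j).val cst σ) ∈ I.rel r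
  | σ, .not φ => ¬ sat cst I σ φ
  | σ, .imp φ ψ => sat cst I σ φ → sat cst I σ ψ
  | σ, .all x φ => ∀ u ∈ I.adom, sat cst I (Function.update σ x u) φ

end FO

/-! ### Agents and AC-MAS -/

/-- The signature of an agent: a finite set of action types with parameter counts. -/
structure AgentSig : Type 1 where
  Act : Type
  [actFin : Fintype Act]
  np : Act → ℕ

attribute [instance] AgentSig.actFin

/-- A ground action: an action type together with ground parameters. -/
def GAct (g : AgentSig) (U : Type) : Type := Σ a : g.Act, Fin (g.np a) → U

/-- Renaming of ground-action parameters. -/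
def GAct.map {g : AgentSig} {U U' : Type} (f : U → U') : GAct g U → GAct g U'
  | ⟨a, u⟩ => ⟨a, fun j => f (u j)⟩

/-- An agent: local states structured as database instances, and a protocol. -/
structure Agent (D : Schema) (g : AgentSig) (U : Type) : Type where
  L : Set (Inst D U)
  Pr : Inst D U → Set (GAct g U)

/-- A global state: one local database instance per agent `0, …, n`
(agent `0` is the environment). -/
abbrev GState (D : Schema) (n : ℕ) (U : Type) := Fin (n+1) → Inst D U

/-- A joint (global) ground action. -/
abbrev JAct {n : ℕ} (sig : Fin (n+1) → AgentSig) (U : Type) : Type := ∀ i, GAct (sig i) U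

def JAct.map {n : ℕ} {sig : Fin (n+1) → AgentSig} {U U' : Type} (f : U → U')
    (a : JAct sig U) : JAct sig U' := fun i => (a i).map f

/-- The set of individuals occurring as parameters of a joint ground action. -/
def actElems {n : ℕ} {sig : Fin (n+1) → AgentSig} {U : Type} (a : JAct sig U) : Set U :=
  { u | ∃ (i : Fin (n+1)) (j : Fin ((sig i).np (a i).1)), (a i).2 j = u }

/-- Active domain of a family of instances (e.g. a global state). -/
def adomF {D : Schema} {X U : Type} (s : X → Inst D U) : Set U := ⋃ i, (s i).adom

/-- The global instance `D_s` associated with a global state. -/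
def gInst {D : Schema} {n : ℕ} {U : Type} (s : GState D n U) : Inst D U where
  rel := fun r => ⋃ i, (s i).rel r
  finite := fun r => Set.finite_iUnion fun i => (s i).finite r

/-- Componentwise disjunctive join of two global states. -/
def oplusG {D : Schema} {n : ℕ} {U : Type} (s t : GState D n U) : GState D.double n U :=
  fun i => (s i).oplus (t i)

/-- An artifact-centric multi-agent system. -/
structure ACMAS (D : Schema) {n : ℕ} (sig : Fin (n+1) → AgentSig) {U : Type}
    (Ag : ∀ i, Agent D (sig i) U) : Type where
  /-- set of (reachable) global states -/
  S : Set (GState D n U)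
  /-- initial global state -/
  s0 : GState D n U
  s0_mem : s0 ∈ S
  states_local : ∀ s ∈ S, ∀ i, s i ∈ (Ag i).L
  /-- global transition function -/
  τ : GState D n U → JAct sig U → Set (GState D n U)
  /-- `τ` is defined only on protocol-enabled joint actions -/
  tau_enabled : ∀ s a, (τ s a).Nonempty → ∀ i, a i ∈ (Ag i).Pr (s i)
  tau_closed : ∀ s ∈ S, ∀ a, τ s a ⊆ S

namespace ACMAS

variable {D : Schema} {n : ℕ} {sig : Fin (n+1) → AgentSig} {U : Type}
  {Ag : ∀ i, Agent D (sig i) U}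

/-- The transition relation `s → t`. -/
def Tr (M : ACMAS D sig Ag) (s t : GState D n U) : Prop := ∃ a, t ∈ M.τ s a

/-- Epistemic indistinguishability for agent `i`. -/
def Epi (M : ACMAS D sig Ag) (i : Fin (n+1)) (s t : GState D n U) : Prop :=
  s ∈ M.S ∧ t ∈ M.S ∧ s i = t i

/-- Union of the epistemic relations of agents `1, …, n`. -/
def EpiAny (M : ACMAS D sig Ag) (s t : GState D n U) : Prop :=
  ∃ i : Fin n, M.Epi i.succ s t

/-- The standard assumptions: the transition relation is serial and `S` is
exactly the set of states reachable from `s0`. -/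
def Std (M : ACMAS D sig Ag) : Prop :=
  (∀ s ∈ M.S, ∃ t, M.Tr s t) ∧ M.S = { s | Relation.ReflTransGen M.Tr M.s0 s }

/-- An (infinite) run. -/
def IsRun (M : ACMAS D sig Ag) (r : ℕ → GState D n U) : Prop :=
  (∀ k, r k ∈ M.S) ∧ ∀ k, M.Tr (r k) (r (k+1))

/-- A temporal-epistemic run. -/
def IsTERun (M : ACMAS D sig Ag) (r : ℕ → GState D n U) : Prop :=
  (∀ k, r k ∈ M.S) ∧ ∀ k, M.Tr (r k) (r (k+1)) ∨ M.EpiAny (r k) (r (k+1))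

end ACMAS

/-! ### Isomorphisms and equivalent assignments -/

/-- `ι` is a witness for the isomorphism of the families `s` and `s'`:
a constant-preserving bijection between the active domains extended with the
constants, preserving all relations componentwise. -/
def IsWitness {D : Schema} {X C U U' : Type} (cst : C → U) (cst' : C → U')
    (ι : U → U') (s : X → Inst D U) (s' : X → Inst D U') : Prop :=
  Set.BijOn ι (adomF s ∪ Set.range cst) (adomF s' ∪ Set.range cst') ∧
  (∀ c, ι (cst c) = cst' c) ∧
  ∀ (i : X) (r : D.Rel) (t : Fin (D.arity r) → U),
    (∀ j, t j ∈ adomF s ∪ Set.range cst) →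
    (t ∈ (s i).rel r ↔ (fun j => ι (t j)) ∈ (s' i).rel r)

/-- Isomorphism of families of instances (in particular global states). -/
def Iso {D : Schema} {X C U U' : Type} (cst : C → U) (cst' : C → U')
    (s : X → Inst D U) (s' : X → Inst D U') : Prop :=
  ∃ ι, IsWitness cst cst' ι s s'

/-- Equivalent assignments for a set `V` of variables w.r.t. `s` and `s'`. -/
def EqAssign {D : Schema} {n : ℕ} {C U U' : Type} (cst : C → U) (cst' : C → U')
    (V : Set ℕ) (σ : ℕ → U) (σ' : ℕ → U')
    (s : GState D n U) (s' : GState D n U') : Prop :=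
  ∃ γ : U → U',
    Set.BijOn γ (adomF s ∪ Set.range cst ∪ σ '' V)
      (adomF s' ∪ Set.range cst' ∪ σ' '' V) ∧
    IsWitness cst cst' γ s s' ∧
    ∀ x ∈ V, σ' x = γ (σ x)

/-! ### Simulations and bisimulations -/

section Bisim

variable {D : Schema} {n : ℕ} {sig sig' : Fin (n+1) → AgentSig} {C U U' : Type}
  {Ag : ∀ i, Agent D (sig i) U} {Ag' : ∀ i, Agent D (sig' i) U'}

/-- Simulation between two AC-MAS. -/
def IsSim (cst : C → U) (cst' : C → U')
    (M : ACMAS D sig Ag) (M' : ACMAS D sig' Ag')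
    (R : GState D n U → GState D n U' → Prop) : Prop :=
  ∀ s s', R s s' →
    s ∈ M.S ∧ s' ∈ M'.S ∧ Iso cst cst' s s' ∧
    ∀ t, M.Tr s t → ∃ t', M'.Tr s' t' ∧ R t t'

/-- Bisimulation. -/
def IsBisim (cst : C → U) (cst' : C → U')
    (M : ACMAS D sig Ag) (M' : ACMAS D sig' Ag')
    (R : GState D n U → GState D n U' → Prop) : Prop :=
  IsSim cst cst' M M' R ∧ IsSim cst' cst M' M (fun s' s => R s s')

/-- Bisimilarity of states. -/
def Bisimilar (cst : C → U) (cst' : C → U')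
    (M : ACMAS D sig Ag) (M' : ACMAS D sig' Ag')
    (s : GState D n U) (s' : GState D n U') : Prop :=
  ∃ R, IsBisim cst cst' M M' R ∧ R s s'

/-- `P ≈ P'`: the two systems are bisimilar. -/
def BisimSys (cst : C → U) (cst' : C → U')
    (M : ACMAS D sig Ag) (M' : ACMAS D sig' Ag') : Prop :=
  Bisimilar cst cst' M M' M.s0 M'.s0

/-- ⊕-simulation. -/
def IsOSim (cst : C → U) (cst' : C → U')
    (M : ACMAS D sig Ag) (M' : ACMAS D sig' Ag')
    (R : GState D n U → GState D n U' → Prop) : Prop :=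
  ∀ s s', R s s' →
    s ∈ M.S ∧ s' ∈ M'.S ∧ Iso cst cst' s s' ∧
    (∀ t, M.Tr s t → ∃ t', M'.Tr s' t' ∧
        Iso cst cst' (oplusG s t) (oplusG s' t') ∧ R t t') ∧
    (∀ (t : GState D n U) (i : Fin n), M.Epi i.succ s t →
        ∃ t', M'.Epi i.succ s' t' ∧
          Iso cst cst' (oplusG s t) (oplusG s' t') ∧ R t t')

/-- ⊕-bisimulation. -/
def IsOBisim (cst : C → U) (cst' : C → U')
    (M : ACMAS D sig Ag) (M' : ACMAS D sig' Ag')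
    (R : GState D n U → GState D n U' → Prop) : Prop :=
  IsOSim cst cst' M M' R ∧ IsOSim cst' cst M' M (fun s' s => R s s')

/-- ⊕-bisimilarity of states. -/
def OBisimilar (cst : C → U) (cst' : C → U')
    (M : ACMAS D sig Ag) (M' : ACMAS D sig' Ag')
    (s : GState D n U) (s' : GState D n U') : Prop :=
  ∃ R, IsOBisim cst cst' M M' R ∧ R s s'

/-- The two systems are ⊕-bisimilar. -/
def OBisimSys (cst : C → U) (cst' : C → U')
    (M : ACMAS D sig Ag) (M' : ACMAS D sig' Ag') : Prop :=
  OBisimilar cst cst' M M' M.s0 M'.s0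

end Bisim

/-! ### Uniformity and boundedness -/

section Uniform

variable {D : Schema} {n : ℕ} {sig : Fin (n+1) → AgentSig} {C U : Type}
  {Ag : ∀ i, Agent D (sig i) U}

/-- Temporal condition (1) of uniformity. -/
def UniformT (cst : C → U) (M : ACMAS D sig Ag) : Prop :=
  ∀ s ∈ M.S, ∀ t ∈ M.S, ∀ s' ∈ M.S, ∀ (t' : GState D n U) (a : JAct sig U),
    t ∈ M.τ s a →
    ∀ ι : U → U, IsWitness cst cst ι (oplusG s t) (oplusG s' t') →
    ∀ ι' : U → U,
      (∀ u ∈ adomF (oplusG s t) ∪ Set.range cst, ι' u = ι u) →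
      Set.InjOn ι' (adomF (oplusG s t) ∪ Set.range cst ∪ actElems a) →
      (∀ c, ι' (cst c) = cst c) →
      t' ∈ M.τ s' (JAct.map ι' a)

/-- Epistemic condition (2) of uniformity. -/
def UniformE (cst : C → U) (M : ACMAS D sig Ag) : Prop :=
  ∀ s ∈ M.S, ∀ t ∈ M.S, ∀ s' ∈ M.S, ∀ (t' : GState D n U) (i : Fin n),
    M.Epi i.succ s t → Iso cst cst (oplusG s t) (oplusG s' t') →
    M.Epi i.succ s' t'

/-- Uniform AC-MAS. -/
def Uniform (cst : C → U) (M : ACMAS D sig Ag) : Prop :=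
  UniformT cst M ∧ UniformE cst M

/-- `b`-bounded AC-MAS: no reachable state has more than `b` distinct elements
in its active domain. -/
def BBounded (M : ACMAS D sig Ag) (b : ℕ) : Prop :=
  ∀ s ∈ M.S, (adomF s).Finite ∧ (adomF s).ncard ≤ b

end Uniform

/-- `N_Ag`: the sum over the agents of the maximal number of parameters of
their action types. -/
def NAg {n : ℕ} (sig : Fin (n+1) → AgentSig) : ℕ :=
  ∑ i, Finset.univ.sup (sig i).np

/-! ### Abstractions -/

section Abstraction

variable {D : Schema} {n : ℕ} {sig : Fin (n+1) → AgentSig} {C U U' : Type}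
  {Ag : ∀ i, Agent D (sig i) U} {Ag' : ∀ i, Agent D (sig i) U'}

/-- `A'` is the abstract agent corresponding to `A`, over the domain `U'`. -/
def IsAbstractAgent {g : AgentSig} (cst : C → U) (cst' : C → U')
    (A : Agent D g U) (A' : Agent D g U') : Prop :=
  ∀ (l' : Inst D U') (α' : GAct g U'), α' ∈ A'.Pr l' ↔
    ∃ l ∈ A.L, ∃ α ∈ A.Pr l, ∃ ι : U → U',
      IsWitness cst cst' ι (fun _ : PUnit => l) (fun _ : PUnit => l') ∧
      ∃ ι' : U → U',
        (∀ u ∈ l.adom ∪ Set.range cst, ι' u = ι u) ∧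
        Set.InjOn ι' (l.adom ∪ Set.range cst ∪ Set.range α.2) ∧
        α' = α.map ι'

/-- `M'` is an abstraction of `M` (over the abstract agents `Ag'`). -/
def IsAbstraction (cst : C → U) (cst' : C → U')
    (M : ACMAS D sig Ag) (M' : ACMAS D sig Ag') : Prop :=
  (∀ i, IsAbstractAgent cst cst' (Ag i) (Ag' i)) ∧
  Iso cst' cst M'.s0 M.s0 ∧
  ∀ (s' t' : GState D n U') (a' : JAct sig U'),
    t' ∈ M'.τ s' a' ↔
      ∃ s ∈ M.S, ∃ t ∈ M.S, ∃ a : JAct sig U, t ∈ M.τ s a ∧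
        ∃ ι : U → U', IsWitness cst cst' ι s s' ∧ IsWitness cst cst' ι t t' ∧
          ∃ ι' : U → U',
            (∀ u ∈ adomF s ∪ adomF t ∪ Set.range cst, ι' u = ι u) ∧
            Set.InjOn ι' (adomF s ∪ adomF t ∪ Set.range cst ∪ actElems a) ∧
            a' = JAct.map ι' a

/-- `M'` is a ⊕-abstraction of `M` (over the abstract agents `Ag'`).
The requirement `s0' = s0` is rendered, across the two interpretation
domains, as: the initial states are isomorphic and `adom(s0) ⊆ C`. -/
def IsOAbstraction (cst : C → U) (cst' : C → U')
    (M : ACMAS D sig Ag) (M' : ACMAS D sig Ag') : Prop :=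
  (∀ i, IsAbstractAgent cst cst' (Ag i) (Ag' i)) ∧
  (Iso cst cst' M.s0 M'.s0 ∧ adomF M.s0 ⊆ Set.range cst) ∧
  ∀ (s' t' : GState D n U') (a' : JAct sig U'),
    t' ∈ M'.τ s' a' ↔
      ∃ s ∈ M.S, ∃ t ∈ M.S, ∃ a : JAct sig U, t ∈ M.τ s a ∧
        ∃ ι : U → U',
          IsWitness cst cst' ι (oplusG s t) (oplusG s' t') ∧
          ∃ ι' : U → U',
            (∀ u ∈ adomF (oplusG s t) ∪ Set.range cst, ι' u = ι u) ∧
            Set.InjOn ι' (adomF (oplusG s t) ∪ Set.range cst ∪ actElems a) ∧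
            a' = JAct.map ι' a

end Abstraction

/-! ### Temporal-epistemic specification languages -/

/-- Sentence-atomic FO-CTL formulas. -/
inductive SAFOCTL (D : Schema) (C : Type) : Type where
  | atom : (ψ : FO D C) → ψ.free = ∅ → SAFOCTL D C
  | not : SAFOCTL D C → SAFOCTL D C
  | imp : SAFOCTL D C → SAFOCTL D C → SAFOCTL D C
  | ax : SAFOCTL D C → SAFOCTL D C
  | au : SAFOCTL D C → SAFOCTL D C → SAFOCTL D C
  | eu : SAFOCTL D C → SAFOCTL D C → SAFOCTL D C

/-- Satisfaction of SA-FO-CTL formulas at a global state. -/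
def SAFOCTL.sat {D : Schema} {C : Type} {n : ℕ} {sig : Fin (n+1) → AgentSig}
    {U : Type} {Ag : ∀ i, Agent D (sig i) U}
    (cst : C → U) (M : ACMAS D sig Ag) :
    SAFOCTL D C → GState D n U → Prop
  | .atom ψ _, s => ∀ σ, FO.sat cst (gInst s) σ ψ
  | .not φ, s => ¬ SAFOCTL.sat cst M φ s
  | .imp φ ψ, s => SAFOCTL.sat cst M φ s → SAFOCTL.sat cst M ψ s
  | .ax φ, s => ∀ r, M.IsRun r → r 0 = s → SAFOCTL.sat cst M φ (r 1)
  | .au φ ψ, s => ∀ r, M.IsRun r → r 0 = s →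
      ∃ k, SAFOCTL.sat cst M ψ (r k) ∧ ∀ j < k, SAFOCTL.sat cst M φ (r j)
  | .eu φ ψ, s => ∃ r, M.IsRun r ∧ r 0 = s ∧
      ∃ k, SAFOCTL.sat cst M ψ (r k) ∧ ∀ j < k, SAFOCTL.sat cst M φ (r j)

/-- `P ⊨ φ` for SA-FO-CTL. -/
def SAFOCTL.satM {D : Schema} {C : Type} {n : ℕ} {sig : Fin (n+1) → AgentSig}
    {U : Type} {Ag : ∀ i, Agent D (sig i) U}
    (cst : C → U) (M : ACMAS D sig Ag) (φ : SAFOCTL D C) : Prop :=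
  SAFOCTL.sat cst M φ M.s0

/-- FO-CTLK formulas, with epistemic operators for agents `1, …, n` and
common knowledge. -/
inductive FOCTLK (D : Schema) (C : Type) (n : ℕ) : Type where
  | atom : FO D C → FOCTLK D C n
  | not : FOCTLK D C n → FOCTLK D C n
  | imp : FOCTLK D C n → FOCTLK D C n → FOCTLK D C n
  | all : ℕ → FOCTLK D C n → FOCTLK D C n
  | ax : FOCTLK D C n → FOCTLK D C n
  | au : FOCTLK D C n → FOCTLK D C n → FOCTLK D C n
  | eu : FOCTLK D C n → FOCTLK D C n → FOCTLK D C n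
  | know : Fin n → FOCTLK D C n → FOCTLK D C n
  | ck : FOCTLK D C n → FOCTLK D C n

namespace FOCTLK

variable {D : Schema} {C : Type} {n : ℕ}

def free : FOCTLK D C n → Finset ℕ
  | .atom ψ => ψ.free
  | .not φ => φ.free
  | .imp φ ψ => φ.free ∪ ψ.free
  | .all x φ => φ.free.erase x
  | .ax φ => φ.free
  | .au φ ψ => φ.free ∪ ψ.free
  | .eu φ ψ => φ.free ∪ ψ.free
  | .know _ φ => φ.free
  | .ck φ => φ.free

def vars : FOCTLK D C n → Finset ℕ
  | .atom ψ => ψ.vars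
  | .not φ => φ.vars
  | .imp φ ψ => φ.vars ∪ ψ.vars
  | .all x φ => insert x φ.vars
  | .ax φ => φ.vars
  | .au φ ψ => φ.vars ∪ ψ.vars
  | .eu φ ψ => φ.vars ∪ ψ.vars
  | .know _ φ => φ.vars
  | .ck φ => φ.vars

/-- Satisfaction `(P, s, σ) ⊨ φ` of FO-CTLK formulas. -/
def sat {sig : Fin (n+1) → AgentSig} {U : Type} {Ag : ∀ i, Agent D (sig i) U}
    (cst : C → U) (M : ACMAS D sig Ag) :
    FOCTLK D C n → GState D n U → (ℕ → U) → Prop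
  | .atom ψ, s, σ => FO.sat cst (gInst s) σ ψ
  | .not φ, s, σ => ¬ sat cst M φ s σ
  | .imp φ ψ, s, σ => sat cst M φ s σ → sat cst M ψ s σ
  | .all x φ, s, σ => ∀ u ∈ adomF s, sat cst M φ s (Function.update σ x u)
  | .ax φ, s, σ => ∀ r, M.IsRun r → r 0 = s → sat cst M φ (r 1) σ
  | .au φ ψ, s, σ => ∀ r, M.IsRun r → r 0 = s →
      ∃ k, sat cst M ψ (r k) σ ∧ ∀ j < k, sat cst M φ (r j) σ
  | .eu φ ψ, s, σ => ∃ r, M.IsRun r ∧ r 0 = s ∧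
      ∃ k, sat cst M ψ (r k) σ ∧ ∀ j < k, sat cst M φ (r j) σ
  | .know i φ, s, σ => ∀ t, M.Epi i.succ s t → sat cst M φ t σ
  | .ck φ, s, σ => ∀ t, Relation.TransGen M.EpiAny s t → sat cst M φ t σ

/-- `P ⊨ φ` for FO-CTLK: satisfaction at the initial state under every
assignment. -/
def satM {sig : Fin (n+1) → AgentSig} {U : Type} {Ag : ∀ i, Agent D (sig i) U}
    (cst : C → U) (M : ACMAS D sig Ag) (φ : FOCTLK D C n) : Prop :=
  ∀ σ : ℕ → U, sat cst M φ M.s0 σ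

end FOCTLK

/-- FO-ECTLK: the existential fragment. -/
inductive FOECTLK (D : Schema) (C : Type) (n : ℕ) : Type where
  | atom : FO D C → FOECTLK D C n
  | and : FOECTLK D C n → FOECTLK D C n → FOECTLK D C n
  | or : FOECTLK D C n → FOECTLK D C n → FOECTLK D C n
  | all : ℕ → FOECTLK D C n → FOECTLK D C n
  | ex : ℕ → FOECTLK D C n → FOECTLK D C n
  | enext : FOECTLK D C n → FOECTLK D C n
  | eu : FOECTLK D C n → FOECTLK D C n → FOECTLK D C n
  | dknow : Fin n → FOECTLK D C n → FOECTLK D C n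
  | dck : FOECTLK D C n → FOECTLK D C n

/-- Satisfaction of FO-ECTLK formulas. -/
def FOECTLK.sat {D : Schema} {C : Type} {n : ℕ} {sig : Fin (n+1) → AgentSig}
    {U : Type} {Ag : ∀ i, Agent D (sig i) U}
    (cst : C → U) (M : ACMAS D sig Ag) :
    FOECTLK D C n → GState D n U → (ℕ → U) → Prop
  | .atom ψ, s, σ => FO.sat cst (gInst s) σ ψ
  | .and φ ψ, s, σ => FOECTLK.sat cst M φ s σ ∧ FOECTLK.sat cst M ψ s σ
  | .or φ ψ, s, σ => FOECTLK.sat cst M φ s σ ∨ FOECTLK.sat cst M ψ s σ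
  | .all x φ, s, σ => ∀ u ∈ adomF s, FOECTLK.sat cst M φ s (Function.update σ x u)
  | .ex x φ, s, σ => ∃ u ∈ adomF s, FOECTLK.sat cst M φ s (Function.update σ x u)
  | .enext φ, s, σ => ∃ r, M.IsRun r ∧ r 0 = s ∧ FOECTLK.sat cst M φ (r 1) σ
  | .eu φ ψ, s, σ => ∃ r, M.IsRun r ∧ r 0 = s ∧
      ∃ k, FOECTLK.sat cst M ψ (r k) σ ∧ ∀ j < k, FOECTLK.sat cst M φ (r j) σ
  | .dknow i φ, s, σ => ∃ t, M.Epi i.succ s t ∧ FOECTLK.sat cst M φ t σ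
  | .dck φ, s, σ => ∃ t, Relation.TransGen M.EpiAny s t ∧ FOECTLK.sat cst M φ t σ

/-- `P ⊨ φ` for FO-ECTLK. -/
def FOECTLK.satM {D : Schema} {C : Type} {n : ℕ} {sig : Fin (n+1) → AgentSig}
    {U : Type} {Ag : ∀ i, Agent D (sig i) U}
    (cst : C → U) (M : ACMAS D sig Ag) (φ : FOECTLK D C n) : Prop :=
  ∀ σ : ℕ → U, FOECTLK.sat cst M φ M.s0 σ

/-- `Mb` is the `b`-restriction of `M`. -/
def IsBRestriction {D : Schema} {n : ℕ} {sig : Fin (n+1) → AgentSig} {U : Type}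
    {Ag : ∀ i, Agent D (sig i) U} (Mb M : ACMAS D sig Ag) (b : ℕ) : Prop :=
  Mb.s0 = M.s0 ∧
  Mb.S = { s ∈ M.S | (adomF s).Finite ∧ (adomF s).ncard ≤ b } ∧
  ∀ s a, Mb.τ s a = { t ∈ M.τ s a | s ∈ Mb.S ∧ t ∈ Mb.S }

/-! ### Artifact-centric programs -/

/-- A declarative artifact-centric program. -/
structure ACProgram (D : Schema) (C : Type) {n : ℕ} (sig : Fin (n+1) → AgentSig) where
  /-- local database schemas, as sets of relation symbols -/
  locRel : Fin (n+1) → Set D.Rel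
  locDisj : ∀ i j, i ≠ j → Disjoint (locRel i) (locRel j)
  /-- initial local states; their values are constants -/
  l0 : ∀ _ : Fin (n+1), Inst D C
  l0_loc : ∀ i r, r ∉ locRel i → (l0 i).rel r = ∅
  /-- preconditions: FO-formulas over the local schema whose free variables
  are among the action parameters -/
  pre : ∀ i, (sig i).Act → FO D C
  /-- postconditions: FO-formulas over the global schema and its primed copy -/
  post : ∀ i, (sig i).Act → FO D.double C
  pre_free : ∀ i a, ↑(pre i a).free ⊆ { x : ℕ | x < (sig i).np a }
  post_free : ∀ i a, ↑(post i a).free ⊆ { x : ℕ | x < (sig i).np a }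
  pre_loc : ∀ i a, (pre i a).UsesOnly (locRel i)

namespace ACProgram

variable {D : Schema} {C : Type} {n : ℕ} {sig : Fin (n+1) → AgentSig}

/-- The constants mentioned in the program. -/
def progConsts (P : ACProgram D C sig) : Set C :=
  (⋃ i, (P.l0 i).adom) ∪
  ⋃ i, ⋃ a : (sig i).Act, ((P.pre i a).consts ∪ (P.post i a).consts)

/-- Ground values of the postcondition parameters of a joint ground action. -/
def postElems (P : ACProgram D C sig) {U : Type} (a : JAct sig U) : Set U :=
  { u | ∃ (i : Fin (n+1)) (j : Fin ((sig i).np (a i).1)),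
      (j : ℕ) ∈ (P.post i (a i).1).free ∧ (a i).2 j = u }

/-- The agent induced by the program for index `i`. -/
def InducedAgent {U : Type} (cst : C → U) (P : ACProgram D C sig) (i : Fin (n+1))
    (A : Agent D (sig i) U) : Prop :=
  A.L = { l : Inst D U | ∀ r, r ∉ P.locRel i → l.rel r = ∅ } ∧
  ∀ (l : Inst D U) (α : GAct (sig i) U), α ∈ A.Pr l ↔
    ∀ σ : ℕ → U, (∀ j : Fin ((sig i).np α.1), σ (j : ℕ) = α.2 j) →
      FO.sat cst l σ (P.pre i α.1)

/-- The transitions induced by the program. -/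
def InducedTrans {U : Type} (cst : C → U) (P : ACProgram D C sig)
    (s t : GState D n U) (a : JAct sig U) : Prop :=
  (∀ i, ∀ σ : ℕ → U, (∀ j : Fin ((sig i).np (a i).1), σ (j : ℕ) = (a i).2 j) →
      FO.sat cst (s i) σ (P.pre i (a i).1)) ∧
  adomF t ⊆ adomF s ∪ P.postElems a ∪ cst '' (⋃ i, (P.post i (a i).1).consts) ∧
  (∀ i, ∀ σ : ℕ → U, (∀ j : Fin ((sig i).np (a i).1), σ (j : ℕ) = (a i).2 j) →
      FO.sat cst ((gInst s).oplus (gInst t)) σ (P.post i (a i).1))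

/-- `M` is the AC-MAS induced by the program `P` (the transition relation is
assumed to be serial). -/
def InducedACMAS {U : Type} (cst : C → U) (P : ACProgram D C sig)
    (Ag : ∀ i, Agent D (sig i) U) (M : ACMAS D sig Ag) : Prop :=
  (∀ i, P.InducedAgent cst i (Ag i)) ∧
  M.s0 = (fun i => (P.l0 i).map cst) ∧
  (∀ s t a, t ∈ M.τ s a ↔ P.InducedTrans cst s t a) ∧
  M.Std

end ACProgram

/-!
By induction on the formula, satisfaction is preserved between `(s, σ)` and `(s', σ')` whenever
`s`, `s'` are isomorphic copies of ⊕-bisimilar states and `σ`, `σ'` are equivalent assignments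
for `vars φ`. A step `s → t` is moved by uniformity to the bisimilar state, answered there by
the ⊕-bisimulation, and moved back by uniformity to `s'`; the copy `t'` of `t` is obtained by
extending the equivalence of assignments injectively to `adom s ∪ adom t ∪ C ∪ σ(vars φ)`,
which the cardinality bound on the other domain permits. Epistemic steps are handled alike.
-/

open Cardinal

universe u

theorem Set.InjOn.exists_extension {α β : Type u} {A B : Set α} {f : α → β} (hf : InjOn f A)
    (hAB : A ⊆ B) (hB : B.Finite) (hcard : #B ≤ #β) :
    ∃ g : α → β, EqOn g f A ∧ InjOn g B := by
  classical
  -- cancel the finite `#A = #(f '' A)` in `#(B \ A) + #A = #B ≤ #β = #(f '' A)ᶜ + #(f '' A)`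
  have hroom : #↥(B \ A) ≤ #↥(f '' A)ᶜ := by
    rw [← add_le_add_iff_of_lt_aleph0 (hB.subset hAB).lt_aleph0, mk_sdiff_add_mk hAB,
      ← mk_image_eq_of_injOn f A hf, add_comm, mk_sum_compl]
    exact hcard
  obtain ⟨e⟩ := (le_def _ _).1 hroom
  refine ⟨fun x => if hx : x ∈ B \ A then e ⟨x, hx⟩ else f x,
    fun x hx => dif_neg fun h => h.2 hx, fun x hx y hy hxy => ?_⟩
  have hfresh : ∀ z (hz : z ∈ B \ A), (e ⟨z, hz⟩ : β) ∉ f '' A := fun z hz => (e ⟨z, hz⟩).2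
  by_cases hxA : x ∈ A <;> by_cases hyA : y ∈ A <;>
    simp only [mem_sdiff, hx, hy, hxA, hyA, not_true, and_false, and_true, not_false_eq_true,
      dif_pos, dif_neg] at hxy
  · exact hf hxA hyA hxy
  · exact absurd ⟨x, hxA, hxy⟩ (hfresh y ⟨hy, hyA⟩)
  · exact absurd ⟨y, hyA, hxy.symm⟩ (hfresh x ⟨hx, hxA⟩)
  · exact congrArg Subtype.val (e.injective (Subtype.ext hxy))

namespace Inst

variable {D : Schema} {U U' : Type}

theorem mem_adom_of_mem_rel {I : Inst D U} {r : D.Rel} {t : Fin (D.arity r) → U}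
    (h : t ∈ I.rel r) (j : Fin (D.arity r)) : t j ∈ I.adom :=
  ⟨r, t, h, j, rfl⟩

theorem adom_finite (I : Inst D U) : I.adom.Finite := by
  refine (finite_iUnion fun r => (I.finite r).biUnion fun t _ => finite_range t).subset ?_
  rintro u ⟨r, t, ht, j, rfl⟩
  exact mem_iUnion.2 ⟨r, mem_biUnion ht ⟨j, rfl⟩⟩

theorem adom_oplus (I J : Inst D U) : (I.oplus J).adom = I.adom ∪ J.adom := by
  ext u
  constructor
  · rintro ⟨r | r, t, ht, j, rfl⟩
    exacts [Or.inl ⟨r, t, ht, j, rfl⟩, Or.inr ⟨r, t, ht, j, rfl⟩]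
  · rintro (⟨r, t, ht, j, rfl⟩ | ⟨r, t, ht, j, rfl⟩)
    exacts [⟨.inl r, t, ht, j, rfl⟩, ⟨.inr r, t, ht, j, rfl⟩]

theorem adom_map (f : U → U') (I : Inst D U) : (I.map f).adom = f '' I.adom := by
  ext u
  constructor
  · rintro ⟨r, _, ⟨t, ht, rfl⟩, j, rfl⟩
    exact ⟨t j, mem_adom_of_mem_rel ht j, rfl⟩
  · rintro ⟨_, ⟨r, t, ht, j, rfl⟩, rfl⟩
    exact ⟨r, f ∘ t, ⟨t, ht, rfl⟩, j, rfl⟩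

end Inst

section ActiveDomain

variable {D : Schema} {C X U U' : Type} {n : ℕ}

def mapF (f : U → U') (s : X → Inst D U) : X → Inst D U' := fun i => (s i).map f

def adomC (cst : C → U) (s : X → Inst D U) : Set U := adomF s ∪ range cst

theorem mem_adomF_of_mem_rel {s : X → Inst D U} {i : X} {r : D.Rel}
    {t : Fin (D.arity r) → U} (h : t ∈ (s i).rel r) (j : Fin (D.arity r)) : t j ∈ adomF s :=
  mem_iUnion.2 ⟨i, Inst.mem_adom_of_mem_rel h j⟩

theorem adomC_finite [Finite X] [Finite C] (cst : C → U) (s : X → Inst D U) :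
    (adomC cst s).Finite :=
  (finite_iUnion fun i => (s i).adom_finite).union (finite_range cst)

theorem adomF_mapF (f : U → U') (s : X → Inst D U) : adomF (mapF f s) = f '' adomF s := by
  simp only [adomF, mapF, Inst.adom_map, image_iUnion]

theorem adom_gInst (s : GState D n U) : (gInst s).adom = adomF s := by
  ext u
  constructor
  · rintro ⟨r, t, ht, j, rfl⟩
    obtain ⟨i, hi⟩ := mem_iUnion.1 ht
    exact mem_adomF_of_mem_rel hi j
  · intro hu
    obtain ⟨i, r, t, ht, j, rfl⟩ := mem_iUnion.1 hu
    exact ⟨r, t, mem_iUnion.2 ⟨i, ht⟩, j, rfl⟩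

theorem adomC_oplusG (cst : C → U) (s t : GState D n U) :
    adomC cst (oplusG s t) = adomF s ∪ adomF t ∪ range cst := by
  simp only [adomC, adomF, oplusG, Inst.adom_oplus, iUnion_union_distrib]

theorem adomC_subset_oplusG_left (cst : C → U) (s t : GState D n U) :
    adomC cst s ⊆ adomC cst (oplusG s t) := by
  rw [adomC_oplusG]
  exact union_subset_union_left _ subset_union_left

theorem adomC_subset_oplusG_right (cst : C → U) (s t : GState D n U) :
    adomC cst t ⊆ adomC cst (oplusG s t) := by
  rw [adomC_oplusG]
  exact union_subset_union_left _ subset_union_right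

end ActiveDomain

section Witness

variable {D : Schema} {C X U U' U'' : Type} {n : ℕ}
  {cst : C → U} {cst' : C → U'} {cst'' : C → U''} {ι : U → U'}

theorem image_range_eq_of_apply_eq (hc : ∀ c, ι (cst c) = cst' c) :
    ι '' range cst = range cst' := by
  rw [← range_comp]
  exact congrArg range (funext hc)

theorem image_adomF_eq_of_rel_iff {s : X → Inst D U} {s' : X → Inst D U'} {A : Set U}
    {A' : Set U'} (hbij : BijOn ι A A') (hA : adomF s ⊆ A) (hA' : adomF s' ⊆ A')
    (hrel : ∀ i r (t : Fin (D.arity r) → U), (∀ j, t j ∈ A) →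
      (t ∈ (s i).rel r ↔ (fun j => ι (t j)) ∈ (s' i).rel r)) :
    ι '' adomF s = adomF s' := by
  apply Subset.antisymm
  · rintro _ ⟨_, hu, rfl⟩
    obtain ⟨i, r, t, ht, j, rfl⟩ := mem_iUnion.1 hu
    exact mem_adomF_of_mem_rel
      ((hrel i r t fun j => hA (mem_adomF_of_mem_rel ht j)).1 ht) j
  · intro u' hu'
    obtain ⟨i, r, t', ht', j, rfl⟩ := mem_iUnion.1 hu'
    choose t htA htι using fun j => hbij.surjOn (hA' (mem_adomF_of_mem_rel ht' j))
    have ht : t ∈ (s i).rel r := (hrel i r t htA).2 (by rwa [funext htι])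
    exact ⟨t j, mem_adomF_of_mem_rel ht j, htι j⟩

namespace IsWitness

variable {s : X → Inst D U} {s' : X → Inst D U'}

theorem bijOn (h : IsWitness cst cst' ι s s') : BijOn ι (adomC cst s) (adomC cst' s') := h.1

theorem image_adomF (h : IsWitness cst cst' ι s s') : ι '' adomF s = adomF s' :=
  image_adomF_eq_of_rel_iff h.1 subset_union_left subset_union_left h.2.2

theorem congr {κ : U → U'} (h : IsWitness cst cst' ι s s') (hκ : EqOn κ ι (adomC cst s)) :
    IsWitness cst cst' κ s s' := by
  refine ⟨h.1.congr hκ.symm, fun c => (hκ (Or.inr ⟨c, rfl⟩)).trans (h.2.1 c),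
    fun i r t ht => ?_⟩
  rw [show (fun j => κ (t j)) = fun j => ι (t j) from funext fun j => hκ (ht j)]
  exact h.2.2 i r t ht

theorem comp {κ : U' → U''} {s'' : X → Inst D U''} (h : IsWitness cst cst' ι s s')
    (h' : IsWitness cst' cst'' κ s' s'') : IsWitness cst cst'' (κ ∘ ι) s s'' :=
  ⟨h'.1.comp h.1, fun c => by simp only [Function.comp, h.2.1, h'.2.1],
    fun i r t ht => (h.2.2 i r t ht).trans (h'.2.2 i r _ fun j => h.1.mapsTo (ht j))⟩

theorem symm {g : U' → U} (h : IsWitness cst cst' ι s s') (hg : LeftInvOn g ι (adomC cst s)) :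
    IsWitness cst' cst g s' s := by
  have hinv : InvOn g ι (adomC cst s) (adomC cst' s') :=
    ⟨hg, fun y hy => by obtain ⟨x, hx, rfl⟩ := h.1.surjOn hy; rw [hg hx]⟩
  have hbij : BijOn g (adomC cst' s') (adomC cst s) := h.1.symm hinv.symm
  refine ⟨hbij, fun c => by rw [← h.2.1 c, hg (Or.inr ⟨c, rfl⟩)], fun i r t' ht' => ?_⟩
  have := h.2.2 i r (fun j => g (t' j)) fun j => hbij.mapsTo (ht' j)
  rw [show (fun j => ι (g (t' j))) = t' from funext fun j => hinv.2 (ht' j)] at this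
  exact this.symm

/-- A tuple leaving the active domain belongs to no relation on either side. -/
theorem rel_iff_of_injOn (h : IsWitness cst cst' ι s s') {A : Set U} (hA : adomC cst s ⊆ A)
    (hinj : InjOn ι A) {i : X} {r : D.Rel} {t : Fin (D.arity r) → U} (ht : ∀ j, t j ∈ A) :
    t ∈ (s i).rel r ↔ (fun j => ι (t j)) ∈ (s' i).rel r := by
  by_cases hall : ∀ j, t j ∈ adomC cst s
  · exact h.2.2 i r t hall
  push Not at hall
  obtain ⟨j, hj⟩ := hall
  refine iff_of_false (fun ht' => hj (Or.inl (mem_adomF_of_mem_rel ht' j))) fun ht' => hj ?_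
  obtain ⟨w, hw, hwt⟩ := h.image_adomF.symm ▸ mem_adomF_of_mem_rel ht' j
  exact hinj (hA (Or.inl hw)) (ht j) hwt ▸ Or.inl hw

theorem oplusG_of_injOn {s t : GState D n U} {s' t' : GState D n U'}
    (hs : IsWitness cst cst' ι s s') (ht : IsWitness cst cst' ι t t')
    (hinj : InjOn ι (adomC cst (oplusG s t))) :
    IsWitness cst cst' ι (oplusG s t) (oplusG s' t') := by
  refine ⟨?_, hs.2.1, fun i r v hv => ?_⟩
  · have himage : ι '' adomC cst (oplusG s t) = adomC cst' (oplusG s' t') := by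
      rw [adomC_oplusG, adomC_oplusG, image_union, image_union, hs.image_adomF,
        ht.image_adomF, image_range_eq_of_apply_eq hs.2.1]
    exact (himage ▸ hinj.bijOn_image :
      BijOn ι (adomC cst (oplusG s t)) (adomC cst' (oplusG s' t')))
  · cases r with
    | inl r => exact hs.rel_iff_of_injOn (adomC_subset_oplusG_left cst s t) hinj hv
    | inr r => exact ht.rel_iff_of_injOn (adomC_subset_oplusG_right cst s t) hinj hv

theorem oplusG_right {s t : GState D n U} {s' t' : GState D n U'}
    (h : IsWitness cst cst' ι (oplusG s t) (oplusG s' t')) : IsWitness cst cst' ι t t' := by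
  have hrel : ∀ i r (v : Fin (D.arity r) → U), (∀ j, v j ∈ adomC cst (oplusG s t)) →
      (v ∈ (t i).rel r ↔ (fun j => ι (v j)) ∈ (t' i).rel r) :=
    fun i r v hv => h.2.2 i (.inr r) v hv
  have himage : ι '' adomC cst t = adomC cst' t' := by
    rw [adomC, adomC, image_union, image_range_eq_of_apply_eq h.2.1,
      image_adomF_eq_of_rel_iff h.1 (subset_union_left.trans (adomC_subset_oplusG_right cst s t))
        (subset_union_left.trans (adomC_subset_oplusG_right cst' s' t')) hrel]
  refine ⟨(himage ▸ (h.1.injOn.mono (adomC_subset_oplusG_right cst s t)).bijOn_image :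
    BijOn ι (adomC cst t) (adomC cst' t')), h.2.1,
    fun i r v hv => hrel i r v fun j => adomC_subset_oplusG_right cst s t (hv j)⟩

end IsWitness

theorem isWitness_mapF {f : U → U'} {s : X → Inst D U} (hinj : InjOn f (adomC cst s))
    (hc : ∀ c, f (cst c) = cst' c) : IsWitness cst cst' f s (mapF f s) := by
  have himage : f '' adomC cst s = adomC cst' (mapF f s) := by
    rw [adomC, adomC, image_union, adomF_mapF, image_range_eq_of_apply_eq hc]
  refine ⟨(himage ▸ hinj.bijOn_image : BijOn f (adomC cst s) (adomC cst' (mapF f s))), hc,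
    fun i r t ht => ⟨fun hmem => ⟨t, hmem, rfl⟩, ?_⟩⟩
  rintro ⟨v, hv, hvt⟩
  have : v = t := funext fun j =>
    hinj (Or.inl (mem_adomF_of_mem_rel hv j)) (ht j) (congrFun hvt j)
  exact this ▸ hv

namespace Iso

variable {s : X → Inst D U} {s' : X → Inst D U'}

theorem refl (cst : C → U) (s : X → Inst D U) : Iso cst cst s s :=
  ⟨id, bijOn_id _, fun _ => rfl, fun _ _ _ _ => Iff.rfl⟩

theorem trans {s'' : X → Inst D U''} (h : Iso cst cst' s s') (h' : Iso cst' cst'' s' s'') :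
    Iso cst cst'' s s'' :=
  let ⟨_, hι⟩ := h
  let ⟨_, hκ⟩ := h'
  ⟨_, hι.comp hκ⟩

theorem symm [Nonempty U] (h : Iso cst cst' s s') : Iso cst' cst s' s :=
  let ⟨_, hι⟩ := h
  ⟨_, hι.symm hι.1.injOn.leftInvOn_invFunOn⟩

theorem oplusG_right {s t : GState D n U} {s' t' : GState D n U'}
    (h : Iso cst cst' (oplusG s t) (oplusG s' t')) : Iso cst cst' t t' :=
  let ⟨_, hι⟩ := h
  ⟨_, IsWitness.oplusG_right hι⟩

end Iso

end Witness

section EqAssign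

variable {D : Schema} {C U U' : Type} {n : ℕ} {cst : C → U} {cst' : C → U'} {V : Set ℕ}
  {γ : U → U'} {σ : ℕ → U} {σ' : ℕ → U'} {s : GState D n U} {s' : GState D n U'}

def IsEqAssignWitness (cst : C → U) (cst' : C → U') (V : Set ℕ) (γ : U → U') (σ : ℕ → U)
    (σ' : ℕ → U') (s : GState D n U) (s' : GState D n U') : Prop :=
  BijOn γ (adomF s ∪ range cst ∪ σ '' V) (adomF s' ∪ range cst' ∪ σ' '' V) ∧
    IsWitness cst cst' γ s s' ∧ ∀ x ∈ V, σ' x = γ (σ x)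

theorem isEqAssignWitness_of_injOn (hγ : IsWitness cst cst' γ s s')
    (hinj : InjOn γ (adomC cst s ∪ σ '' V)) (hσ : ∀ x ∈ V, σ' x = γ (σ x)) :
    IsEqAssignWitness cst cst' V γ σ σ' s s' := by
  have himage : γ '' (adomC cst s ∪ σ '' V) = adomC cst' s' ∪ σ' '' V := by
    rw [image_union, hγ.bijOn.image_eq, image_image, image_congr fun x hx => (hσ x hx).symm]
  exact ⟨(himage ▸ hinj.bijOn_image :
    BijOn γ (adomC cst s ∪ σ '' V) (adomC cst' s' ∪ σ' '' V)), hγ, hσ⟩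

theorem eqAssign_iff : EqAssign cst cst' V σ σ' s s' ↔
    ∃ γ, IsEqAssignWitness cst cst' V γ σ σ' s s' :=
  Iff.rfl

theorem Term.val_mem {t : Term C} (ht : ↑t.varsF ⊆ V) :
    t.val cst σ ∈ adomC cst s ∪ σ '' V := by
  cases t with
  | inl x => exact Or.inr ⟨x, ht (Finset.mem_singleton_self x), rfl⟩
  | inr c => exact Or.inl (Or.inr ⟨c, rfl⟩)

namespace IsEqAssignWitness

theorem update (h : IsEqAssignWitness cst cst' V γ σ σ' s s') (x : ℕ) {u : U}
    (hu : u ∈ adomF s) :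
    IsEqAssignWitness cst cst' V γ (Function.update σ x u) (Function.update σ' x (γ u)) s s' := by
  refine isEqAssignWitness_of_injOn h.2.1 (h.1.injOn.mono ?_) fun y hy => ?_
  · rintro v (hv | ⟨y, hy, rfl⟩)
    · exact Or.inl hv
    · by_cases hyx : y = x
      · subst hyx
        exact Or.inl (Or.inl (by rwa [Function.update_self]))
      · exact Or.inr ⟨y, hy, (Function.update_of_ne hyx _ _).symm⟩
  · by_cases hyx : y = x
    · subst hyx
      simp only [Function.update_self]
    · simp only [Function.update_of_ne hyx, h.2.2 y hy]

theorem symm [Nonempty U] (h : IsEqAssignWitness cst cst' V γ σ σ' s s') :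
    IsEqAssignWitness cst' cst V (Function.invFunOn γ (adomC cst s ∪ σ '' V)) σ' σ s' s := by
  have hinv := h.1.invOn_invFunOn
  refine isEqAssignWitness_of_injOn (h.2.1.symm (hinv.1.mono subset_union_left))
    (h.1.symm hinv.symm).injOn fun x hx => ?_
  rw [h.2.2 x hx]
  exact (hinv.1 (Or.inr ⟨x, hx, rfl⟩)).symm

theorem map_val (h : IsEqAssignWitness cst cst' V γ σ σ' s s') {t : Term C}
    (ht : ↑t.varsF ⊆ V) : γ (t.val cst σ) = t.val cst' σ' := by
  cases t with
  | inl x => exact (h.2.2 x (ht (Finset.mem_singleton_self x))).symm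
  | inr c => exact h.2.1.2.1 c

end IsEqAssignWitness

theorem EqAssign.symm [Nonempty U] (h : EqAssign cst cst' V σ σ' s s') :
    EqAssign cst' cst V σ' σ s' s :=
  let ⟨_, hγ⟩ := eqAssign_iff.1 h
  ⟨_, hγ.symm⟩

theorem EqAssign.forall_update_iff (h : EqAssign cst cst' V σ σ' s s') (x : ℕ)
    {P : (ℕ → U) → Prop} {P' : (ℕ → U') → Prop}
    (hP : ∀ τ τ', EqAssign cst cst' V τ τ' s s' → (P τ ↔ P' τ')) :
    (∀ u ∈ adomF s, P (Function.update σ x u)) ↔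
      ∀ u' ∈ adomF s', P' (Function.update σ' x u') := by
  obtain ⟨γ, hγ⟩ := eqAssign_iff.1 h
  constructor
  · intro hall u' hu'
    obtain ⟨u, hu, rfl⟩ := hγ.2.1.image_adomF.symm ▸ hu'
    exact (hP _ _ ⟨γ, hγ.update x hu⟩).1 (hall u hu)
  · intro hall u hu
    exact (hP _ _ ⟨γ, hγ.update x hu⟩).2
      (hall _ (hγ.2.1.image_adomF ▸ mem_image_of_mem γ hu))

theorem FO.sat_iff_of_eqAssign {V : Finset ℕ} (ψ : FO D C) (hψ : ψ.vars ⊆ V)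
    (h : EqAssign cst cst' ↑V σ σ' s s') :
    FO.sat cst (gInst s) σ ψ ↔ FO.sat cst' (gInst s') σ' ψ := by
  induction ψ generalizing σ σ' with
  | eq t₁ t₂ =>
    obtain ⟨γ, hγ⟩ := eqAssign_iff.1 h
    rw [FO.vars, Finset.union_subset_iff] at hψ
    have h₁ := Finset.coe_subset.2 hψ.1
    have h₂ := Finset.coe_subset.2 hψ.2
    show t₁.val cst σ = t₂.val cst σ ↔ t₁.val cst' σ' = t₂.val cst' σ'
    rw [← hγ.map_val h₁, ← hγ.map_val h₂]
    exact (hγ.1.injOn.eq_iff (Term.val_mem h₁) (Term.val_mem h₂)).symm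
  | rel r ts =>
    obtain ⟨γ, hγ⟩ := eqAssign_iff.1 h
    have hts : ∀ j, ↑(ts j).varsF ⊆ (↑V : Set ℕ) := fun j =>
      Finset.coe_subset.2 ((Finset.subset_biUnion_of_mem _ (Finset.mem_univ j)).trans hψ)
    show (fun j => (ts j).val cst σ) ∈ ⋃ i, (s i).rel r ↔
      (fun j => (ts j).val cst' σ') ∈ ⋃ i, (s' i).rel r
    rw [show (fun j => (ts j).val cst' σ') = fun j => γ ((ts j).val cst σ) from
      funext fun j => (hγ.map_val (hts j)).symm]
    simp only [mem_iUnion]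
    exact exists_congr fun i => hγ.2.1.rel_iff_of_injOn subset_union_left hγ.1.injOn
      fun j => Term.val_mem (hts j)
  | not ψ ih => exact not_congr (ih hψ h)
  | imp ψ₁ ψ₂ ih₁ ih₂ =>
    rw [FO.vars, Finset.union_subset_iff] at hψ
    exact imp_congr (ih₁ hψ.1 h) (ih₂ hψ.2 h)
  | all x ψ ih =>
    rw [FO.vars, Finset.insert_subset_iff] at hψ
    show (∀ u ∈ (gInst s).adom, _) ↔ ∀ u' ∈ (gInst s').adom, _
    rw [adom_gInst, adom_gInst]
    exact h.forall_update_iff x fun τ τ' hτ => ih hψ.2 hτ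

end EqAssign

namespace ACMAS

variable {D : Schema} {C : Type} {n : ℕ} {sig : Fin (n+1) → AgentSig} {U : Type}
  {Ag : ∀ i, Agent D (sig i) U} {M : ACMAS D sig Ag} {s t : GState D n U}

theorem mem_S_of_tr (hs : s ∈ M.S) (h : M.Tr s t) : t ∈ M.S :=
  let ⟨a, ha⟩ := h
  M.tau_closed s hs a ha

theorem mem_S_of_reflTransGen (h : Relation.ReflTransGen M.Tr M.s0 s) : s ∈ M.S := by
  induction h with
  | refl => exact M.s0_mem
  | tail _ hbc ih => exact mem_S_of_tr ih hbc

theorem exists_isRun (hser : ∀ s ∈ M.S, ∃ t, M.Tr s t) (hs : s ∈ M.S) :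
    ∃ r, M.IsRun r ∧ r 0 = s := by
  choose f hf using fun u : M.S => hser u.1 u.2
  let next : M.S → M.S := fun u => ⟨f u, mem_S_of_tr u.2 (hf u)⟩
  refine ⟨fun k => (next^[k] ⟨s, hs⟩).1, ⟨fun k => (next^[k] _).2, fun k => ?_⟩, rfl⟩
  simp only [Function.iterate_succ_apply']
  exact hf _

theorem IsTERun.cons (hs : s ∈ M.S) {r : ℕ → GState D n U} (hr : M.IsTERun r)
    (hstep : M.Tr s (r 0) ∨ M.EpiAny s (r 0)) : M.IsTERun (Stream'.cons s r) :=
  ⟨fun k => by cases k <;> [exact hs; exact hr.1 _],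
    fun k => by cases k <;> [exact hstep; exact hr.2 _]⟩

theorem exists_isTERun_suffix (h : Relation.ReflTransGen M.Tr M.s0 s)
    {r : ℕ → GState D n U} (hr : M.IsTERun r) (hr0 : r 0 = s) :
    ∃ r' k, M.IsTERun r' ∧ r' 0 = M.s0 ∧ ∀ j, r' (k + j) = r j := by
  induction h generalizing r with
  | refl => exact ⟨r, 0, hr, hr0, fun j => by rw [zero_add]⟩
  | tail hab hbc ih =>
    obtain ⟨r', k, hr', hr'0, hsuf⟩ :=
      ih (hr.cons (mem_S_of_reflTransGen hab) (Or.inl (hr0 ▸ hbc))) rfl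
    exact ⟨r', k + 1, hr', hr'0, fun j => by rw [add_right_comm, add_assoc, hsuf]; rfl⟩

theorem exists_isTERun_through (hM : M.Std) (hs : s ∈ M.S)
    (hst : M.Tr s t ∨ M.EpiAny s t) :
    ∃ r k, M.IsTERun r ∧ r 0 = M.s0 ∧ r k = s ∧ r (k + 1) = t := by
  have ht : t ∈ M.S := hst.elim (mem_S_of_tr hs) fun ⟨_, he⟩ => he.2.1
  obtain ⟨r, hr, hr0⟩ := exists_isRun hM.1 ht
  have hreach : Relation.ReflTransGen M.Tr M.s0 s := by
    rw [hM.2] at hs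
    exact hs
  obtain ⟨r', k, hr', hr'0, hsuf⟩ := exists_isTERun_suffix hreach
    (IsTERun.cons hs ⟨hr.1, fun k => Or.inl (hr.2 k)⟩ (hr0 ▸ hst)) rfl
  exact ⟨r', k, hr', hr'0, hsuf 0, (hsuf 1).trans hr0⟩

def AdomStepBound (cst : C → U) (M : ACMAS D sig Ag) (m κ : Cardinal) : Prop :=
  ∀ s ∈ M.S, ∀ t, M.Tr s t ∨ M.EpiAny s t → #↥(adomF s ∪ adomF t ∪ range cst) + m ≤ κ

theorem adomStepBound_of_isTERun {cst : C → U} {m κ : Cardinal} (hM : M.Std)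
    (h : ∀ r, M.IsTERun r → r 0 = M.s0 → ∀ k,
      #↥(adomF (r k) ∪ adomF (r (k + 1)) ∪ range cst) + m ≤ κ) :
    M.AdomStepBound cst m κ := by
  intro s hs t hst
  obtain ⟨r, k, hr, hr0, rfl, rfl⟩ := exists_isTERun_through hM hs hst
  exact h r hr hr0 k

end ACMAS

section Uniform

variable {D : Schema} {C : Type} {n : ℕ} {sig : Fin (n+1) → AgentSig} {U : Type}
  {Ag : ∀ i, Agent D (sig i) U} {M : ACMAS D sig Ag} {cst : C → U}

def OplusIsoClosed (cst : C → U) (S : Set (GState D n U))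
    (Step : GState D n U → GState D n U → Prop) : Prop :=
  ∀ s t s' t', s ∈ S → s' ∈ S → Step s t → Iso cst cst (oplusG s t) (oplusG s' t') → Step s' t'

theorem actElems_finite (a : JAct sig U) : (actElems a).Finite :=
  (finite_iUnion fun i => finite_range (a i).2).subset
    fun _ ⟨i, j, hj⟩ => mem_iUnion.2 ⟨i, j, hj⟩

theorem UniformT.oplusIsoClosed [Finite C] (hu : UniformT cst M) :
    OplusIsoClosed cst M.S M.Tr := by
  rintro s t s' t' hs hs' ⟨a, hta⟩ ⟨ι, hι⟩
  obtain ⟨ι', hι', hinj⟩ := hι.1.injOn.exists_extension subset_union_left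
    ((adomC_finite cst _).union (actElems_finite a)) (mk_set_le _)
  exact ⟨_, hu s hs t (M.tau_closed s hs a hta) s' hs' t' a hta ι hι ι' (fun u hu => hι' hu)
    hinj fun c => (hι' (Or.inr ⟨c, rfl⟩)).trans (hι.2.1 c)⟩

theorem UniformE.oplusIsoClosed (hu : UniformE cst M) (i : Fin n) :
    OplusIsoClosed cst M.S (M.Epi i.succ) :=
  fun s t s' t' hs hs' hst hiso => hu s hs t hst.2.1 s' hs' t' i hst hiso

end Uniform

section Transfer

variable {D : Schema} {C : Type} {n : ℕ} {sig sig' : Fin (n+1) → AgentSig} {U U' : Type}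
  {cst : C → U} {cst' : C → U'} {Ag : ∀ i, Agent D (sig i) U}
  {Ag' : ∀ i, Agent D (sig' i) U'} {M : ACMAS D sig Ag} {M' : ACMAS D sig' Ag'}
  {R : GState D n U → GState D n U' → Prop} {V : Finset ℕ}
  {s : GState D n U} {s' : GState D n U'} {σ : ℕ → U} {σ' : ℕ → U'}

theorem IsOBisim.symm (hb : IsOBisim cst cst' M M' R) :
    IsOBisim cst' cst M' M (fun s' s => R s s') :=
  ⟨hb.2, hb.1⟩

theorem mk_adomC_oplusG_union_image_le {t : GState D n U} {κ : Cardinal}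
    (h : #↥(adomF s ∪ adomF t ∪ range cst) + V.card ≤ κ) :
    #↥(adomC cst (oplusG s t) ∪ σ '' V) ≤ κ := by
  refine (mk_union_le _ _).trans (le_trans ?_ h)
  rw [adomC_oplusG, ← mk_coe_finset]
  gcongr
  exact mk_image_le

theorem IsWitness.exists_oplusG_copy [Finite C] {ι : U → U'} {t : GState D n U} {E : Set U}
    (hι : IsWitness cst cst' ι s s') (hinj : InjOn ι (adomC cst s ∪ E)) (hE : E.Finite)
    (hcard : #↥(adomC cst (oplusG s t) ∪ E) ≤ #U') :
    ∃ δ : U → U', EqOn δ ι (adomC cst s ∪ E) ∧ InjOn δ (adomC cst (oplusG s t) ∪ E) ∧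
      IsWitness cst cst' δ (oplusG s t) (oplusG s' (mapF δ t)) := by
  obtain ⟨δ, hδι, hδ⟩ := hinj.exists_extension
    (union_subset_union_left _ (adomC_subset_oplusG_left cst s t))
    ((adomC_finite cst _).union hE) hcard
  have hδs : IsWitness cst cst' δ s s' := hι.congr fun u hu => hδι (Or.inl hu)
  have hδt : IsWitness cst cst' δ t (mapF δ t) := isWitness_mapF
    (hδ.mono ((adomC_subset_oplusG_right cst s t).trans subset_union_left)) hδs.2.1
  exact ⟨δ, hδι, hδ, hδs.oplusG_of_injOn hδt (hδ.mono subset_union_left)⟩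

/-- The states need only be isomorphic copies of `R`-related states: this leaves room to
choose successors on which the assignments stay equivalent. -/
def Matched (cst : C → U) (cst' : C → U') (M : ACMAS D sig Ag) (M' : ACMAS D sig' Ag')
    (R : GState D n U → GState D n U' → Prop) (V : Finset ℕ) (s : GState D n U)
    (s' : GState D n U') (σ : ℕ → U) (σ' : ℕ → U') : Prop :=
  s ∈ M.S ∧ s' ∈ M'.S ∧ (∃ s₀ s₀', R s₀ s₀' ∧ Iso cst cst s s₀ ∧ Iso cst' cst' s' s₀') ∧
    EqAssign cst cst' ↑V σ σ' s s'

namespace Matched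

theorem symm [Nonempty U] (hm : Matched cst cst' M M' R V s s' σ σ') :
    Matched cst' cst M' M (fun s' s => R s s') V s' s σ' σ :=
  let ⟨hs, hs', ⟨s₀, s₀', hR, hiso, hiso'⟩, he⟩ := hm
  ⟨hs', hs, ⟨s₀', s₀, hR, hiso', hiso⟩, he.symm⟩

theorem exists_step [Finite C] [Nonempty U] [Nonempty U']
    {Step : GState D n U → GState D n U → Prop} {Step' : GState D n U' → GState D n U' → Prop}
    (hU : OplusIsoClosed cst M.S Step) (hU' : OplusIsoClosed cst' M'.S Step')
    (hcl : ∀ s t, s ∈ M.S → Step s t → t ∈ M.S)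
    (hcl' : ∀ s' t', s' ∈ M'.S → Step' s' t' → t' ∈ M'.S)
    (hsim : ∀ s₀ s₀', R s₀ s₀' → s₀ ∈ M.S ∧ s₀' ∈ M'.S ∧ ∀ t₀, Step s₀ t₀ →
      ∃ t₀', Step' s₀' t₀' ∧ Iso cst cst' (oplusG s₀ t₀) (oplusG s₀' t₀') ∧ R t₀ t₀')
    (hm : Matched cst cst' M M' R V s s' σ σ') {t : GState D n U} (hst : Step s t)
    (hcard : #↥(adomF s ∪ adomF t ∪ range cst) + V.card ≤ #U') :
    ∃ t', Step' s' t' ∧ Matched cst cst' M M' R V t t' σ σ' := by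
  obtain ⟨hs, hs', ⟨s₀, s₀', hR, ⟨ν, hν⟩, -⟩, he⟩ := hm
  obtain ⟨hs₀, hs₀', hforth⟩ := hsim s₀ s₀' hR
  obtain ⟨μ, -, -, hμ⟩ := hν.exists_oplusG_copy (t := t) (E := ∅)
    (by rw [union_empty]; exact hν.bijOn.injOn) finite_empty (mk_set_le _)
  have hst₀ : Step s₀ (mapF μ t) := hU s t s₀ _ hs hs₀ hst ⟨μ, hμ⟩
  obtain ⟨t₀', hst₀', hiso₀, hR'⟩ := hforth _ hst₀
  obtain ⟨γ, hγ⟩ := eqAssign_iff.1 he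
  obtain ⟨δ, hδγ, hδ, hδw⟩ := hγ.2.1.exists_oplusG_copy hγ.1.injOn
    (V.finite_toSet.image σ) (mk_adomC_oplusG_union_image_le hcard)
  have hiso' : Iso cst' cst' (oplusG s₀' t₀') (oplusG s' (mapF δ t)) :=
    ((Iso.trans ⟨μ, hμ⟩ hiso₀).symm).trans ⟨δ, hδw⟩
  have hst' : Step' s' (mapF δ t) := hU' s₀' t₀' s' _ hs₀' hs' hst₀' hiso'
  refine ⟨_, hst', hcl s t hs hst, hcl' _ _ hs' hst',
    ⟨_, t₀', hR', Iso.oplusG_right ⟨μ, hμ⟩, hiso'.symm.oplusG_right⟩, δ, ?_⟩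
  exact isEqAssignWitness_of_injOn hδw.oplusG_right
    (hδ.mono (union_subset_union_left _ (adomC_subset_oplusG_right cst s t)))
    fun x hx => (hγ.2.2 x hx).trans (hδγ (Or.inr ⟨x, hx, rfl⟩)).symm

theorem exists_tr [Finite C] [Nonempty U] [Nonempty U'] (hb : IsOBisim cst cst' M M' R)
    (hu : Uniform cst M) (hu' : Uniform cst' M') (hbd : M.AdomStepBound cst V.card #U')
    (hm : Matched cst cst' M M' R V s s' σ σ') {t : GState D n U} (ht : M.Tr s t) :
    ∃ t', M'.Tr s' t' ∧ Matched cst cst' M M' R V t t' σ σ' :=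
  hm.exists_step hu.1.oplusIsoClosed hu'.1.oplusIsoClosed (fun _ _ => ACMAS.mem_S_of_tr)
    (fun _ _ => ACMAS.mem_S_of_tr)
    (fun s₀ s₀' hR => let h := hb.1 s₀ s₀' hR; ⟨h.1, h.2.1, h.2.2.2.1⟩) ht
    (hbd s hm.1 t (Or.inl ht))

theorem exists_epi [Finite C] [Nonempty U] [Nonempty U'] (hb : IsOBisim cst cst' M M' R)
    (hu : Uniform cst M) (hu' : Uniform cst' M') (hbd : M.AdomStepBound cst V.card #U')
    (hm : Matched cst cst' M M' R V s s' σ σ') {i : Fin n} {t : GState D n U}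
    (ht : M.Epi i.succ s t) :
    ∃ t', M'.Epi i.succ s' t' ∧ Matched cst cst' M M' R V t t' σ σ' :=
  hm.exists_step (hu.2.oplusIsoClosed i) (hu'.2.oplusIsoClosed i) (fun _ _ _ h => h.2.1)
    (fun _ _ _ h => h.2.1)
    (fun s₀ s₀' hR => let h := hb.1 s₀ s₀' hR; ⟨h.1, h.2.1, fun t₀ => h.2.2.2.2 t₀ i⟩) ht
    (hbd s hm.1 t (Or.inr ⟨i, ht⟩))

theorem exists_isRun [Finite C] [Nonempty U] [Nonempty U'] (hb : IsOBisim cst cst' M M' R)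
    (hu : Uniform cst M) (hu' : Uniform cst' M') (hbd : M.AdomStepBound cst V.card #U')
    (hm : Matched cst cst' M M' R V s s' σ σ') {r : ℕ → GState D n U} (hr : M.IsRun r)
    (hr0 : r 0 = s) :
    ∃ r', M'.IsRun r' ∧ r' 0 = s' ∧ ∀ k, Matched cst cst' M M' R V (r k) (r' k) σ σ' := by
  choose next hnext using fun k (p : {u' // Matched cst cst' M M' R V (r k) u' σ σ'}) =>
    let ⟨u', hu'tr, hm'⟩ := p.2.exists_tr hb hu hu' hbd (hr.2 k)
    (⟨⟨u', hm'⟩, hu'tr⟩ : ∃ q : {u' // Matched cst cst' M M' R V (r (k + 1)) u' σ σ'},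
      M'.Tr p.1 q.1)
  let r' : ∀ k, {u' // Matched cst cst' M M' R V (r k) u' σ σ'} :=
    fun k => Nat.rec ⟨s', hr0 ▸ hm⟩ next k
  exact ⟨fun k => (r' k).1, ⟨fun k => (r' k).2.2.1, fun k => hnext k (r' k)⟩, rfl,
    fun k => (r' k).2⟩

theorem exists_transGen [Finite C] [Nonempty U] [Nonempty U']
    (hb : IsOBisim cst cst' M M' R) (hu : Uniform cst M) (hu' : Uniform cst' M')
    (hbd : M.AdomStepBound cst V.card #U') (hm : Matched cst cst' M M' R V s s' σ σ')
    {t : GState D n U} (ht : Relation.TransGen M.EpiAny s t) :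
    ∃ t', Relation.TransGen M'.EpiAny s' t' ∧ Matched cst cst' M M' R V t t' σ σ' := by
  induction ht with
  | single hst =>
    obtain ⟨i, hi⟩ := hst
    obtain ⟨t', ht', hm'⟩ := hm.exists_epi hb hu hu' hbd hi
    exact ⟨t', .single ⟨i, ht'⟩, hm'⟩
  | tail _ hbc ih =>
    obtain ⟨b', hb', hmb⟩ := ih
    obtain ⟨i, hi⟩ := hbc
    obtain ⟨t', ht', hm'⟩ := hmb.exists_epi hb hu hu' hbd hi
    exact ⟨t', hb'.tail ⟨i, ht'⟩, hm'⟩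

end Matched

theorem exists_matched_s0 [Finite C] (hb : IsOBisim cst cst' M M' R) (hR : R M.s0 M'.s0)
    (hser : ∀ s ∈ M.S, ∃ t, M.Tr s t) (hbd : M.AdomStepBound cst V.card #U') (σ : ℕ → U) :
    ∃ σ', Matched cst cst' M M' R V M.s0 M'.s0 σ σ' := by
  obtain ⟨hs, hs', ⟨ι, hι⟩, -⟩ := hb.1 _ _ hR
  obtain ⟨t, ht⟩ := hser M.s0 M.s0_mem
  have hcard : #↥(adomC cst M.s0 ∪ σ '' V) ≤ #U' :=
    (mk_le_mk_of_subset (union_subset_union_left _ (adomC_subset_oplusG_left cst _ t))).trans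
      (mk_adomC_oplusG_union_image_le (hbd _ M.s0_mem t (Or.inl ht)))
  obtain ⟨γ, hγι, hγ⟩ := hι.1.injOn.exists_extension subset_union_left
    ((adomC_finite cst _).union (V.finite_toSet.image σ)) hcard
  exact ⟨γ ∘ σ, hs, hs', ⟨_, _, hR, Iso.refl _ _, Iso.refl _ _⟩, γ,
    isEqAssignWitness_of_injOn (hι.congr hγι) hγ fun _ _ => rfl⟩

end Transfer

theorem FOCTLK.sat_iff_of_matched {D : Schema} {C : Type} [Finite C] {n : ℕ}
    {sig sig' : Fin (n+1) → AgentSig} {U U' : Type} [Nonempty U] [Nonempty U']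
    {cst : C → U} {cst' : C → U'} {Ag : ∀ i, Agent D (sig i) U}
    {Ag' : ∀ i, Agent D (sig' i) U'} {M : ACMAS D sig Ag} {M' : ACMAS D sig' Ag'}
    {R : GState D n U → GState D n U' → Prop} {V : Finset ℕ}
    (hb : IsOBisim cst cst' M M' R) (hu : Uniform cst M) (hu' : Uniform cst' M')
    (hbd : M.AdomStepBound cst V.card #U') (hbd' : M'.AdomStepBound cst' V.card #U)
    (ψ : FOCTLK D C n) (hψ : ψ.vars ⊆ V) {s : GState D n U} {s' : GState D n U'}
    {σ : ℕ → U} {σ' : ℕ → U'} (hm : Matched cst cst' M M' R V s s' σ σ') :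
    FOCTLK.sat cst M ψ s σ ↔ FOCTLK.sat cst' M' ψ s' σ' := by
  induction ψ generalizing s s' σ σ' with
  | atom χ => exact FO.sat_iff_of_eqAssign χ hψ hm.2.2.2
  | not χ ih => exact not_congr (ih hψ hm)
  | imp χ₁ χ₂ ih₁ ih₂ =>
    rw [FOCTLK.vars, Finset.union_subset_iff] at hψ
    exact imp_congr (ih₁ hψ.1 hm) (ih₂ hψ.2 hm)
  | all x χ ih =>
    rw [FOCTLK.vars, Finset.insert_subset_iff] at hψ
    obtain ⟨hs, hs', hR, he⟩ := hm
    exact he.forall_update_iff x fun τ τ' hτ => ih hψ.2 ⟨hs, hs', hR, hτ⟩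
  | ax χ ih =>
    constructor
    · intro h r' hr' hr'0
      obtain ⟨r, hr, hr0, hrr⟩ := hm.symm.exists_isRun hb.symm hu' hu hbd' hr' hr'0
      exact (ih hψ (hrr 1).symm).1 (h r hr hr0)
    · intro h r hr hr0
      obtain ⟨r', hr', hr'0, hrr⟩ := hm.exists_isRun hb hu hu' hbd hr hr0
      exact (ih hψ (hrr 1)).2 (h r' hr' hr'0)
  | au χ₁ χ₂ ih₁ ih₂ =>
    rw [FOCTLK.vars, Finset.union_subset_iff] at hψ
    constructor
    · intro h r' hr' hr'0
      obtain ⟨r, hr, hr0, hrr⟩ := hm.symm.exists_isRun hb.symm hu' hu hbd' hr' hr'0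
      obtain ⟨k, hk, hj⟩ := h r hr hr0
      exact ⟨k, (ih₂ hψ.2 (hrr k).symm).1 hk,
        fun j hjk => (ih₁ hψ.1 (hrr j).symm).1 (hj j hjk)⟩
    · intro h r hr hr0
      obtain ⟨r', hr', hr'0, hrr⟩ := hm.exists_isRun hb hu hu' hbd hr hr0
      obtain ⟨k, hk, hj⟩ := h r' hr' hr'0
      exact ⟨k, (ih₂ hψ.2 (hrr k)).2 hk, fun j hjk => (ih₁ hψ.1 (hrr j)).2 (hj j hjk)⟩
  | eu χ₁ χ₂ ih₁ ih₂ =>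
    rw [FOCTLK.vars, Finset.union_subset_iff] at hψ
    constructor
    · rintro ⟨r, hr, hr0, k, hk, hj⟩
      obtain ⟨r', hr', hr'0, hrr⟩ := hm.exists_isRun hb hu hu' hbd hr hr0
      exact ⟨r', hr', hr'0, k, (ih₂ hψ.2 (hrr k)).1 hk,
        fun j hjk => (ih₁ hψ.1 (hrr j)).1 (hj j hjk)⟩
    · rintro ⟨r', hr', hr'0, k, hk, hj⟩
      obtain ⟨r, hr, hr0, hrr⟩ := hm.symm.exists_isRun hb.symm hu' hu hbd' hr' hr'0
      exact ⟨r, hr, hr0, k, (ih₂ hψ.2 (hrr k).symm).2 hk,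
        fun j hjk => (ih₁ hψ.1 (hrr j).symm).2 (hj j hjk)⟩
  | know i χ ih =>
    constructor
    · intro h t' ht'
      obtain ⟨t, ht, hm'⟩ := hm.symm.exists_epi hb.symm hu' hu hbd' ht'
      exact (ih hψ hm'.symm).1 (h t ht)
    · intro h t ht
      obtain ⟨t', ht', hm'⟩ := hm.exists_epi hb hu hu' hbd ht
      exact (ih hψ hm').2 (h t' ht')
  | ck χ ih =>
    constructor
    · intro h t' ht'
      obtain ⟨t, ht, hm'⟩ := hm.symm.exists_transGen hb.symm hu' hu hbd' ht'
      exact (ih hψ hm'.symm).1 (h t ht)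
    · intro h t ht
      obtain ⟨t', ht', hm'⟩ := hm.exists_transGen hb hu hu' hbd ht
      exact (ih hψ hm').2 (h t' ht')

theorem statement11_general
    {D : Schema} {C : Type} [Fintype C] {n : ℕ}
    {sig sig' : Fin (n+1) → AgentSig} {U U' : Type}
    (cst : C → U) (cst' : C → U')
    {Ag : ∀ i, Agent D (sig i) U} {Ag' : ∀ i, Agent D (sig' i) U'}
    (M : ACMAS D sig Ag) (M' : ACMAS D sig' Ag')
    (hM : M.Std) (hM' : M'.Std)
    (hu : Uniform cst M) (hu' : Uniform cst' M')
    (hsys : OBisimSys cst cst' M M')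
    (φ : FOCTLK D C n)
    (h1 : ∀ r : ℕ → GState D n U, M.IsTERun r → r 0 = M.s0 → ∀ k : ℕ,
      Cardinal.mk ↥(adomF (r k) ∪ adomF (r (k+1)) ∪ Set.range cst) +
        (φ.vars.card : Cardinal) ≤ Cardinal.mk U')
    (h2 : ∀ r' : ℕ → GState D n U', M'.IsTERun r' → r' 0 = M'.s0 → ∀ k : ℕ,
      Cardinal.mk ↥(adomF (r' k) ∪ adomF (r' (k+1)) ∪ Set.range cst') +
        (φ.vars.card : Cardinal) ≤ Cardinal.mk U) :
    FOCTLK.satM cst M φ ↔ FOCTLK.satM cst' M' φ := by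
  obtain ⟨R, hb, hR⟩ := hsys
  have hbd := ACMAS.adomStepBound_of_isTERun hM h1
  have hbd' := ACMAS.adomStepBound_of_isTERun hM' h2
  constructor
  · intro h σ'
    have : Nonempty U' := ⟨σ' 0⟩
    obtain ⟨σ, hm⟩ := exists_matched_s0 hb.symm hR hM'.1 hbd' σ'
    have : Nonempty U := ⟨σ 0⟩
    exact (FOCTLK.sat_iff_of_matched hb hu hu' hbd hbd' φ subset_rfl hm.symm).1 (h σ)
  · intro h σ
    have : Nonempty U := ⟨σ 0⟩
    obtain ⟨σ', hm⟩ := exists_matched_s0 hb hR hM.1 hbd σ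
    have : Nonempty U' := ⟨σ' 0⟩
    exact (FOCTLK.sat_iff_of_matched hb hu hu' hbd hbd' φ subset_rfl hm).2 (h σ')

theorem statement11
    {D : Schema} {C : Type} [Fintype C] {n : ℕ}
    {sig sig' : Fin (n+1) → AgentSig} {U U' : Type}
    (cst : C → U) (cst' : C → U')
    (hcst : Function.Injective cst) (hcst' : Function.Injective cst')
    {Ag : ∀ i, Agent D (sig i) U} {Ag' : ∀ i, Agent D (sig' i) U'}
    (M : ACMAS D sig Ag) (M' : ACMAS D sig' Ag')
    (hM : M.Std) (hM' : M'.Std)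
    (hu : Uniform cst M) (hu' : Uniform cst' M')
    (hsys : OBisimSys cst cst' M M')
    (φ : FOCTLK D C n)
    (h1 : ∀ r : ℕ → GState D n U, M.IsTERun r → r 0 = M.s0 → ∀ k : ℕ,
      Cardinal.mk ↥(adomF (r k) ∪ adomF (r (k+1)) ∪ Set.range cst) +
        (φ.vars.card : Cardinal) ≤ Cardinal.mk U')
    (h2 : ∀ r' : ℕ → GState D n U', M'.IsTERun r' → r' 0 = M'.s0 → ∀ k : ℕ,
      Cardinal.mk ↥(adomF (r' k) ∪ adomF (r' (k+1)) ∪ Set.range cst') +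
        (φ.vars.card : Cardinal) ≤ Cardinal.mk U) :
    FOCTLK.satM cst M φ ↔ FOCTLK.satM cst' M' φ :=
  statement11_general cst cst' M M' hM hM' hu hu' hsys φ h1 h2
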